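/- Let k be a field and let B be a k-category such that the endomorphism ring of each object is reduced to k (every endomorphism of any object b is a scalar multiple of the identity id_b). Let F : C → B be a Galois covering with chosen fibre objects x_b ∈ F⁻¹(b) and induced Aut₁F-grading Z, and let χ : Aut₁F → k be an additive character (χ(st) = χ(s) + χ(t)). If there exists a family of endomorphisms α_b ∈ B(b,b) such that χ(s) • f = α_c ∘ f − f ∘ α_b for every s ∈ Aut₁F, all objects b, c of B, and every homogeneous f ∈ Z_s(c,b) (i.e., the Euler derivation Δχ is inner), then χ = 0. Consequently the canonical map Δ from additive characters of Aut₁F to the first Hochschild–Mitchell cohomology (derivations modulo inner derivations) is injective. -/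

import Mathlib

open CategoryTheory

universe w v u

section CoveringDefs

variable (k : Type w) [CommRing k]

/-- A functor between `k`-linear categories is `k`-linear:
it is additive and commutes with the scalar action on morphisms. -/
def IsLinearFunctor {C : Type u} [Category.{v} C] [Preadditive C] [CategoryTheory.Linear k C]
    {B : Type u} [Category.{v} B] [Preadditive B] [CategoryTheory.Linear k B]
    (F : C ⥤ B) : Prop :=
  (∀ (x y : C) (f g : x ⟶ y), F.map (f + g) = F.map f + F.map g) ∧
  (∀ (x y : C) (r : k) (f : x ⟶ y), F.map (r • f) = r • F.map f)

variable {C : Type u} [Category.{v} C] [Preadditive C] [CategoryTheory.Linear k C]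
variable {B : Type u} [Category.{v} B] [Preadditive B] [CategoryTheory.Linear k B]

/-- The canonical map `⊕_{y ∈ F⁻¹(c)} C(x,y) →+ B(F(x),c)` induced by `F`
on the source star. -/
noncomputable def starOutHom (F : C ⥤ B) (hF : IsLinearFunctor k F) (x : C) (c : B) :
    (DirectSum {y : C // F.obj y = c} (fun y => (x ⟶ y.1))) →+ (F.obj x ⟶ c) := by
  classical
  exact DirectSum.toAddMonoid fun y =>
    AddMonoidHom.mk' (fun f => F.map f ≫ eqToHom y.2)
      (fun f g => by (try simp only []); rw [hF.1 _ _ f g, Preadditive.add_comp])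

/-- The canonical map `⊕_{y ∈ F⁻¹(c)} C(y,x) →+ B(c,F(x))` induced by `F`
on the target star. -/
noncomputable def starInHom (F : C ⥤ B) (hF : IsLinearFunctor k F) (x : C) (c : B) :
    (DirectSum {y : C // F.obj y = c} (fun y => (y.1 ⟶ x))) →+ (c ⟶ F.obj x) := by
  classical
  exact DirectSum.toAddMonoid fun y =>
    AddMonoidHom.mk' (fun f => eqToHom y.2.symm ≫ F.map f)
      (fun f g => by (try simp only []); rw [hF.1 _ _ f g, Preadditive.comp_add])

/-- `F : C ⥤ B` is a covering of `k`-categories: it is a `k`-linear functor,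
surjective on objects, inducing bijections on all source and target stars. -/
def IsCovering (F : C ⥤ B) : Prop :=
  ∃ hF : IsLinearFunctor k F,
    Function.Surjective F.obj ∧
    (∀ (x : C) (c : B), Function.Bijective (starOutHom k F hF x c)) ∧
    (∀ (x : C) (c : B), Function.Bijective (starInHom k F hF x c))

end CoveringDefs

/-- A `k`-category is connected if the equivalence relation generated by
"there is a nonzero morphism from `x` to `y`" relates any two objects. -/
def IsConnectedKCat (C : Type u) [Category.{v} C] [Preadditive C] : Prop :=
  ∀ x y : C, Relation.EqvGen (fun a b : C => ∃ f : a ⟶ b, f ≠ 0) x y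

section GaloisDefs

variable (k : Type w) [CommRing k]
variable {C : Type u} [Category.{v} C] [Preadditive C] [CategoryTheory.Linear k C]
variable {B : Type u} [Category.{v} B] [Preadditive B] [CategoryTheory.Linear k B]
variable {D : Type u} [Category.{v} D] [Preadditive D] [CategoryTheory.Linear k D]

/-- `H` belongs to `Aut₁ F`: it is an invertible `k`-linear endofunctor with `F ∘ H = F`. -/
def MemAut1 (F : C ⥤ B) (H : C ⥤ C) : Prop :=
  IsLinearFunctor k H ∧
  (∃ Hinv : C ⥤ C, H ⋙ Hinv = 𝟭 C ∧ Hinv ⋙ H = 𝟭 C) ∧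
  H ⋙ F = F

/-- A covering is Galois if its source is connected and `Aut₁ F` acts transitively
on some fibre. -/
def IsGaloisCovering (F : C ⥤ B) : Prop :=
  IsCovering k F ∧ IsConnectedKCat C ∧
  ∃ b₀ : B, ∀ x y : C, F.obj x = b₀ → F.obj y = b₀ →
    ∃ H : C ⥤ C, MemAut1 k F H ∧ H.obj x = y

/-- A morphism `(H, J)` of coverings from `F : C ⥤ B` to `G : D ⥤ B`:
`H` and `J` are `k`-linear, `J` is an isomorphism which is the identity on objects,
and `G ∘ H = J ∘ F`. -/
def IsCoveringMorphism (F : C ⥤ B) (G : D ⥤ B) (H : C ⥤ D) (J : B ⥤ B) : Prop :=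
  IsLinearFunctor k H ∧ IsLinearFunctor k J ∧
  (∃ Jinv : B ⥤ B, J ⋙ Jinv = 𝟭 B ∧ Jinv ⋙ J = 𝟭 B) ∧
  (∀ b : B, J.obj b = b) ∧
  H ⋙ G = F ⋙ J

end GaloisDefs

/-- A universal covering: a Galois covering `U` such that for every Galois covering
`F : C ⥤ B` and every pair of objects `u₀`, `c₀` above the same object of `B`,
there is a unique `k`-linear functor `H` with `F ∘ H = U` and `H u₀ = c₀`. -/
def IsUniversalCovering (k : Type w) [CommRing k]
    {U' : Type u} [Category.{v} U'] [Preadditive U'] [CategoryTheory.Linear k U']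
    {B : Type u} [Category.{v} B] [Preadditive B] [CategoryTheory.Linear k B]
    (U : U' ⥤ B) : Prop :=
  IsGaloisCovering k U ∧
  ∀ (C : Type u) [Category.{v} C] [Preadditive C] [CategoryTheory.Linear k C]
    (F : C ⥤ B), IsGaloisCovering k F →
    ∀ (u₀ : U') (c₀ : C), U.obj u₀ = F.obj c₀ →
      ∃! H : U' ⥤ C, IsLinearFunctor k H ∧ H ⋙ F = U ∧ H.obj u₀ = c₀

/-- Given a functor `F : C ⥤ B`, a choice `x` of objects of `C` above each object of `B`,
and an endofunctor `H` of `C`, the subset `Z_H(c,b) = F(C(x_b, H x_c))` of `B(b,c)`. -/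
def gradeSet {C : Type u} [Category.{v} C] {B : Type u} [Category.{v} B]
    (F : C ⥤ B) (x : B → C) (H : C ⥤ C) (b c : B) : Set (b ⟶ c) :=
  {g | ∃ (h₁ : b = F.obj (x b)) (h₂ : F.obj (H.obj (x c)) = c)
        (f : x b ⟶ H.obj (x c)), g = eqToHom h₁ ≫ F.map f ≫ eqToHom h₂}

/-- The homogeneous component `Z_H(c,b)` as a `k`-submodule of `B(b,c)`. -/
noncomputable def gradeSubmodule (k : Type w) [CommRing k]
    {C : Type u} [Category.{v} C]
    {B : Type u} [Category.{v} B] [Preadditive B] [CategoryTheory.Linear k B]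
    (F : C ⥤ B) (x : B → C) (H : C ⥤ C) (b c : B) : Submodule k (b ⟶ c) :=
  Submodule.span k (gradeSet F x H b c)

open Limits

/-!
Write `α b = r b • 𝟙 b`. A nonzero `f ∈ Z_s(c,b)` gives `χ s = r c - r b`. A nonzero morphism
`g : t·x_b ⟶ u·x_c` of `C` is carried by `t⁻¹` and `F` to a nonzero element of `Z_{t⁻¹u}(c,b)`, so
`r b - χ t = r c - χ u`. Since `C` is connected and `Aut₁ F` acts transitively on every fibre
(transitivity spreads from one fibre along nonzero morphisms, by the star bijections), the value
`r (F y) - χ t` for `t·x_{F y} = y` is the same for all objects `y` and all such `t`; comparing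
`y = x_b` with `t = 𝟭` and `y = s·x_b` with `t = s` gives `χ s = 0`. If instead `C` has a zero
object, connectedness makes `C` a single zero object, so `s ⋙ s = s` and `χ s = 2 χ s`.
-/

lemma Relation.EqvGen.apply_eq {α : Type*} {β : Sort*} {r : α → α → Prop} {f : α → β}
    (hf : ∀ a b, r a b → f a = f b) {a b : α} (h : Relation.EqvGen r a b) : f a = f b :=
  congrArg (Quot.lift f hf) (Quot.eqvGen_sound h)

lemma DirectSum.exists_apply_ne_zero_of_map_ne_zero {ι : Type*} {β : ι → Type*}
    [∀ i, AddCommMonoid (β i)] {M : Type*} [AddCommMonoid M] (φ : DirectSum ι β →+ M)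
    {ζ : DirectSum ι β} (h : φ ζ ≠ 0) : ∃ i, ζ i ≠ 0 :=
  DFunLike.ne_iff.1 fun h₀ : ζ = 0 => h (by rw [h₀, map_zero])

section Connected

variable {C : Type u} [Category.{v} C] [Preadditive C]

lemma IsConnectedKCat.isZero_of_isZero (hC : IsConnectedKCat C) {a : C} (ha : IsZero a)
    (y : C) : IsZero y := by
  refine (hC a y).apply_eq (f := IsZero) ?_ ▸ ha
  rintro a b ⟨g, hg⟩
  exact propext (iff_of_false (fun h => hg (h.eq_of_src g 0)) fun h => hg (h.eq_of_tgt g 0))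

lemma IsConnectedKCat.comp_self_eq_of_isZero (hC : IsConnectedKCat C) {a : C} (ha : IsZero a)
    (s : C ⥤ C) : s ⋙ s = s := by
  have hzero := hC.isZero_of_isZero ha
  have hobj : ∀ y z : C, y = z := fun y z =>
    (hC y z).apply_eq (f := id) fun a _ ⟨g, hg⟩ => absurd ((hzero a).eq_of_src g 0) hg
  exact CategoryTheory.Functor.ext (fun y => hobj _ _) fun y z f => (hzero _).eq_of_src _ _

end Connected

section LinearFunctor

variable {k : Type w} [CommRing k]
variable {C : Type u} [Category.{v} C] [Preadditive C] [CategoryTheory.Linear k C]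
variable {D : Type u} [Category.{v} D] [Preadditive D] [CategoryTheory.Linear k D]

lemma IsLinearFunctor.map_zero {H : C ⥤ D} (hH : IsLinearFunctor k H) {X Y : C} :
    H.map (0 : X ⟶ Y) = 0 := by
  simpa using hH.2 X Y 0 0

lemma IsLinearFunctor.map_ne_zero {H : C ⥤ D} [H.Faithful] (hH : IsLinearFunctor k H)
    {X Y : C} {f : X ⟶ Y} (hf : f ≠ 0) : H.map f ≠ 0 :=
  fun h => hf (H.map_injective (h.trans hH.map_zero.symm))

end LinearFunctor

section Covering

variable {k : Type w} [CommRing k]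
variable {C : Type u} [Category.{v} C] [Preadditive C] [CategoryTheory.Linear k C]
variable {B : Type u} [Category.{v} B] [Preadditive B] [CategoryTheory.Linear k B]
variable {F : C ⥤ B}

lemma starOutHom_of [DecidableEq C] (hFl : IsLinearFunctor k F) {x : C} {c : B}
    (y : {y : C // F.obj y = c}) (f : x ⟶ y.1) :
    starOutHom k F hFl x c (DirectSum.of _ y f) = F.map f ≫ eqToHom y.2 :=
  DirectSum.toAddMonoid_of _ _ _

lemma starInHom_of [DecidableEq C] (hFl : IsLinearFunctor k F) {x : C} {c : B}
    (y : {y : C // F.obj y = c}) (f : y.1 ⟶ x) :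
    starInHom k F hFl x c (DirectSum.of _ y f) = eqToHom y.2.symm ≫ F.map f :=
  DirectSum.toAddMonoid_of _ _ _

lemma IsCovering.faithful (hF : IsCovering k F) : F.Faithful where
  map_injective {X Y} f g h := by
    classical
    obtain ⟨hFl, -, hOut, -⟩ := hF
    refine DirectSum.of_injective (β := fun y : {y : C // F.obj y = F.obj Y} => X ⟶ y.1)
      ⟨Y, rfl⟩ ((hOut X (F.obj Y)).1 ?_)
    rw [starOutHom_of, starOutHom_of, h]

end Covering

section Aut1

variable {k : Type w} [CommRing k]
variable {C : Type u} [Category.{v} C] [Preadditive C] [CategoryTheory.Linear k C]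
variable {B : Type u} [Category.{v} B]
variable {F : C ⥤ B}

lemma memAut1_id : MemAut1 k F (𝟭 C) :=
  ⟨⟨fun _ _ _ _ => rfl, fun _ _ _ _ => rfl⟩, ⟨𝟭 C, rfl, rfl⟩, Functor.id_comp F⟩

lemma MemAut1.comp {s t : C ⥤ C} (hs : MemAut1 k F s) (ht : MemAut1 k F t) :
    MemAut1 k F (s ⋙ t) := by
  obtain ⟨hsl, ⟨si, hs₁, hs₂⟩, hsF⟩ := hs
  obtain ⟨htl, ⟨ti, ht₁, ht₂⟩, htF⟩ := ht
  refine ⟨⟨fun X Y f g => ?_, fun X Y r f => ?_⟩, ⟨ti ⋙ si, ?_, ?_⟩, ?_⟩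
  · simp only [Functor.comp_map, hsl.1, htl.1]
  · simp only [Functor.comp_map, hsl.2, htl.2]
  · rw [Functor.assoc, ← Functor.assoc t, ht₁, Functor.id_comp, hs₁]
  · rw [Functor.assoc, ← Functor.assoc si, hs₂, Functor.id_comp, ht₂]
  · rw [Functor.assoc, htF, hsF]

lemma MemAut1.faithful {t : C ⥤ C} (ht : MemAut1 k F t) : t.Faithful := by
  obtain ⟨-, ⟨ti, h, -⟩, -⟩ := ht
  exact Functor.Faithful.of_comp_eq h

lemma MemAut1.exists_inv {t : C ⥤ C} (ht : MemAut1 k F t) :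
    ∃ ti : C ⥤ C, MemAut1 k F ti ∧ t ⋙ ti = 𝟭 C := by
  have := ht.faithful
  obtain ⟨htl, ⟨ti, h₁, h₂⟩, htF⟩ := ht
  have hmap : ∀ {X Y : C} (f : X ⟶ Y), t.map (ti.map f) =
      eqToHom (Functor.congr_obj h₂ X) ≫ f ≫ eqToHom (Functor.congr_obj h₂ Y).symm :=
    fun f => by simpa using Functor.congr_hom h₂ f
  have htil : IsLinearFunctor k ti := by
    refine ⟨fun X Y f g => t.map_injective ?_, fun X Y r f => t.map_injective ?_⟩
    · simp only [htl.1, hmap, Preadditive.add_comp, Preadditive.comp_add]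
    · simp only [htl.2, hmap, Linear.smul_comp, Linear.comp_smul]
  refine ⟨ti, ⟨htil, ⟨t, h₂, h₁⟩, ?_⟩, h₁⟩
  conv_lhs => rw [← htF, ← Functor.assoc, h₂, Functor.id_comp]

lemma character_id_eq_zero {χ : (C ⥤ C) → k}
    (hχ : ∀ s t : C ⥤ C, MemAut1 k F s → MemAut1 k F t → χ (s ⋙ t) = χ s + χ t) :
    χ (𝟭 C) = 0 := by
  have h := hχ (𝟭 C) (𝟭 C) memAut1_id memAut1_id
  rwa [Functor.id_comp, left_eq_add] at h

end Aut1

section FibreTransitive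

variable (k : Type w) [CommRing k]
variable {C : Type u} [Category.{v} C] [Preadditive C] [CategoryTheory.Linear k C]
variable {B : Type u} [Category.{v} B] [Preadditive B] [CategoryTheory.Linear k B]

def FibreTransitive (F : C ⥤ B) (b : B) : Prop :=
  ∀ y z : C, F.obj y = b → F.obj z = b → ∃ t : C ⥤ C, MemAut1 k F t ∧ t.obj y = z

variable {k} {F : C ⥤ B}

lemma FibreTransitive.exists_starOutHom_eq_starInHom [DecidableEq C]
    (hFl : IsLinearFunctor k F) {b : B} (hb : FibreTransitive k F b) {v z : C} (hv : F.obj v = b)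
    (η : DirectSum {y : C // F.obj y = b} fun y => y.1 ⟶ z) :
    ∃ ξ : DirectSum {w : C // F.obj w = F.obj z} fun w => v ⟶ w.1,
      (∀ w, ξ w ≠ 0 → ∃ t, MemAut1 k F t ∧ t.obj z = w.1) ∧
      starOutHom k F hFl v (F.obj z) ξ = eqToHom hv ≫ starInHom k F hFl z b η := by
  induction η using DirectSum.induction_on with
  | zero => exact ⟨0, fun w hw => absurd (DirectSum.zero_apply _) hw, by simp⟩
  | of y m =>
    obtain ⟨t, ht, hty⟩ := hb y.1 v y.2 hv
    have hFt : F.obj (t.obj z) = F.obj z := Functor.congr_obj ht.2.2 z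
    refine ⟨DirectSum.of _ ⟨t.obj z, hFt⟩ (eqToHom hty.symm ≫ t.map m), fun w hw => ?_, ?_⟩
    · obtain rfl : w = ⟨t.obj z, hFt⟩ := by
        by_contra hne
        exact hw (DirectSum.of_eq_of_ne _ _ _ hne)
      exact ⟨t, ht, rfl⟩
    · have := Functor.congr_hom ht.2.2 m
      simp only [Functor.comp_map] at this
      rw [starOutHom_of, starInHom_of, F.map_comp, this, eqToHom_map]
      simp
  | add η₁ η₂ ih₁ ih₂ =>
    obtain ⟨ξ₁, hs₁, he₁⟩ := ih₁
    obtain ⟨ξ₂, hs₂, he₂⟩ := ih₂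
    refine ⟨ξ₁ + ξ₂, fun w hw => ?_, by rw [map_add, map_add, he₁, he₂, Preadditive.comp_add]⟩
    by_cases h₁ : ξ₁ w = 0
    · exact hs₂ w (by simpa [h₁] using hw)
    · exact hs₁ w h₁

lemma FibreTransitive.exists_starInHom_eq_starOutHom [DecidableEq C]
    (hFl : IsLinearFunctor k F) {c : B} (hc : FibreTransitive k F c) {v z : C} (hv : F.obj v = c)
    (η : DirectSum {y : C // F.obj y = c} fun y => z ⟶ y.1) :
    ∃ ξ : DirectSum {w : C // F.obj w = F.obj z} fun w => w.1 ⟶ v,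
      (∀ w, ξ w ≠ 0 → ∃ t, MemAut1 k F t ∧ t.obj z = w.1) ∧
      starInHom k F hFl v (F.obj z) ξ = starOutHom k F hFl z c η ≫ eqToHom hv.symm := by
  induction η using DirectSum.induction_on with
  | zero => exact ⟨0, fun w hw => absurd (DirectSum.zero_apply _) hw, by simp⟩
  | of y m =>
    obtain ⟨t, ht, hty⟩ := hc y.1 v y.2 hv
    have hFt : F.obj (t.obj z) = F.obj z := Functor.congr_obj ht.2.2 z
    refine ⟨DirectSum.of _ ⟨t.obj z, hFt⟩ (t.map m ≫ eqToHom hty), fun w hw => ?_, ?_⟩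
    · obtain rfl : w = ⟨t.obj z, hFt⟩ := by
        by_contra hne
        exact hw (DirectSum.of_eq_of_ne _ _ _ hne)
      exact ⟨t, ht, rfl⟩
    · have := Functor.congr_hom ht.2.2 m
      simp only [Functor.comp_map] at this
      rw [starOutHom_of, starInHom_of, F.map_comp, this, eqToHom_map]
      simp
  | add η₁ η₂ ih₁ ih₂ =>
    obtain ⟨ξ₁, hs₁, he₁⟩ := ih₁
    obtain ⟨ξ₂, hs₂, he₂⟩ := ih₂
    refine ⟨ξ₁ + ξ₂, fun w hw => ?_, by rw [map_add, map_add, he₁, he₂, Preadditive.add_comp]⟩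
    by_cases h₁ : ξ₁ w = 0
    · exact hs₂ w (by simpa [h₁] using hw)
    · exact hs₁ w h₁

lemma FibreTransitive.target_of_ne_zero (hcov : IsCovering k F) {b c : B}
    (hb : FibreTransitive k F b) (h : b ⟶ c) (hh : h ≠ 0) : FibreTransitive k F c := by
  classical
  obtain ⟨hFl, -, hOut, hIn⟩ := hcov
  rintro z₁ z₂ rfl hz
  -- Lift `h` to a nonzero `ζ v : v ⟶ z₂`. Decomposing `F (ζ v)` through the star of `z₁` and
  -- moving each summand to start at `v` decomposes it through the star of `v`, where by
  -- uniqueness the only summand is `ζ v` itself, at `z₂`.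
  obtain ⟨ζ, hζ⟩ := (hIn z₂ b).2 (h ≫ eqToHom hz.symm)
  obtain ⟨v, hv⟩ := DirectSum.exists_apply_ne_zero_of_map_ne_zero _ (by rw [hζ]; simpa using hh)
  obtain ⟨η, hη⟩ := (hIn z₁ b).2 (eqToHom v.2.symm ≫ F.map (ζ v) ≫ eqToHom hz)
  obtain ⟨ξ, hsupp, hξ⟩ := hb.exists_starOutHom_eq_starInHom hFl v.2 η
  have hξv : ξ = DirectSum.of _ ⟨z₂, hz⟩ (ζ v) :=
    (hOut v.1 (F.obj z₁)).1 (by rw [hξ, hη, starOutHom_of]; simp)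
  exact hsupp ⟨z₂, hz⟩ (by rwa [hξv, DirectSum.of_eq_same])

lemma FibreTransitive.source_of_ne_zero (hcov : IsCovering k F) {b c : B}
    (hc : FibreTransitive k F c) (h : b ⟶ c) (hh : h ≠ 0) : FibreTransitive k F b := by
  classical
  obtain ⟨hFl, -, hOut, hIn⟩ := hcov
  rintro z₁ z₂ rfl hz
  obtain ⟨ζ, hζ⟩ := (hOut z₂ c).2 (eqToHom hz ≫ h)
  obtain ⟨v, hv⟩ := DirectSum.exists_apply_ne_zero_of_map_ne_zero _ (by rw [hζ]; simpa using hh)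
  obtain ⟨η, hη⟩ := (hOut z₁ c).2 (eqToHom hz.symm ≫ F.map (ζ v) ≫ eqToHom v.2)
  obtain ⟨ξ, hsupp, hξ⟩ := hc.exists_starInHom_eq_starOutHom hFl v.2 η
  have hξv : ξ = DirectSum.of _ ⟨z₂, hz⟩ (ζ v) :=
    (hIn v.1 (F.obj z₁)).1 (by rw [hξ, hη, starInHom_of]; simp)
  exact hsupp ⟨z₂, hz⟩ (by rwa [hξv, DirectSum.of_eq_same])

lemma IsGaloisCovering.fibreTransitive (hF : IsGaloisCovering k F) (b : B) :
    FibreTransitive k F b := by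
  obtain ⟨hcov, hconn, b₀, hb₀⟩ := hF
  obtain ⟨hFl, hsurj, -⟩ := id hcov
  have := hcov.faithful
  obtain ⟨y₀, rfl⟩ := hsurj b₀
  obtain ⟨y, rfl⟩ := hsurj b
  refine (hconn y₀ y).apply_eq (f := fun a => FibreTransitive k F (F.obj a)) ?_ ▸ hb₀
  rintro a a' ⟨g, hg⟩
  exact propext ⟨fun h => h.target_of_ne_zero hcov _ (hFl.map_ne_zero hg),
    fun h => h.source_of_ne_zero hcov _ (hFl.map_ne_zero hg)⟩

end FibreTransitive

section EulerDerivation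

variable {k : Type w} [Field k]
variable {C : Type u} [Category.{v} C] [Preadditive C] [CategoryTheory.Linear k C]
variable {B : Type u} [Category.{v} B] [Preadditive B] [CategoryTheory.Linear k B]
variable {F : C ⥤ B} {x : B → C} {χ : (C ⥤ C) → k}

variable (k) in
def IsScalarInnerEuler (F : C ⥤ B) (x : B → C) (χ : (C ⥤ C) → k) (r : B → k) : Prop :=
  ∀ s : C ⥤ C, MemAut1 k F s → ∀ (b c : B) (f : b ⟶ c), f ∈ gradeSet F x s b c →
    χ s • f = (r c - r b) • f

lemma exists_isScalarInnerEuler (hend : ∀ (b : B) (e : b ⟶ b), ∃ r : k, e = r • 𝟙 b)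
    (hinner : ∃ α : ∀ b : B, b ⟶ b, ∀ (s : C ⥤ C), MemAut1 k F s →
      ∀ (b c : B) (f : b ⟶ c), f ∈ gradeSet F x s b c → χ s • f = f ≫ α c - α b ≫ f) :
    ∃ r, IsScalarInnerEuler k F x χ r := by
  obtain ⟨α, hα⟩ := hinner
  choose r hr using fun b => hend b (α b)
  refine ⟨r, fun s hs b c f hf => ?_⟩
  rw [hα s hs b c f hf, hr b, hr c, Linear.comp_smul, Linear.smul_comp, Category.comp_id,
    Category.id_comp, sub_smul]

namespace IsScalarInnerEuler

variable {r : B → k}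

lemma character_eq_sub (hr : IsScalarInnerEuler k F x χ r) (hcov : IsCovering k F)
    (hx : ∀ b : B, F.obj (x b) = b) {s : C ⥤ C} (hs : MemAut1 k F s) {b c : B}
    (f : x b ⟶ s.obj (x c)) (hf : f ≠ 0) : χ s = r c - r b := by
  have := hcov.faithful
  obtain ⟨hFl, -⟩ := hcov
  have hFs : F.obj (s.obj (x c)) = c := (Functor.congr_obj hs.2.2 (x c)).trans (hx c)
  have hg : eqToHom (hx b).symm ≫ F.map f ≫ eqToHom hFs ≠ 0 := by
    simpa using hFl.map_ne_zero hf
  exact smul_left_injective k hg (hr s hs b c _ ⟨_, _, f, rfl⟩)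

lemma sub_eq_sub_of_ne_zero (hr : IsScalarInnerEuler k F x χ r) (hcov : IsCovering k F)
    (hx : ∀ b : B, F.obj (x b) = b)
    (hχ : ∀ s t : C ⥤ C, MemAut1 k F s → MemAut1 k F t → χ (s ⋙ t) = χ s + χ t)
    {t u : C ⥤ C} (ht : MemAut1 k F t) (hu : MemAut1 k F u) {b c : B} {y z : C}
    (hty : t.obj (x b) = y) (huz : u.obj (x c) = z) (g : y ⟶ z) (hg : g ≠ 0) :
    r b - χ t = r c - χ u := by
  subst hty huz
  obtain ⟨ti, hti, hinv⟩ := ht.exists_inv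
  have := hti.faithful
  have hχti : χ t + χ ti = 0 := by rw [← hχ t ti ht hti, hinv, character_id_eq_zero hχ]
  have hf : eqToHom (Functor.congr_obj hinv (x b)).symm ≫ ti.map g ≠ 0 := by
    simpa using hti.1.map_ne_zero hg
  have hχu := hr.character_eq_sub hcov hx (hu.comp hti) _ hf
  rw [hχ u ti hu hti] at hχu
  linear_combination hχu - hχti

lemma sub_eq_sub (hr : IsScalarInnerEuler k F x χ r) (hF : IsGaloisCovering k F)
    (hx : ∀ b : B, F.obj (x b) = b)
    (hχ : ∀ s t : C ⥤ C, MemAut1 k F s → MemAut1 k F t → χ (s ⋙ t) = χ s + χ t)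
    (hid : ∀ a : C, 𝟙 a ≠ 0) {y z : C} {t u : C ⥤ C} (ht : MemAut1 k F t) (hu : MemAut1 k F u)
    (hty : t.obj (x (F.obj y)) = y) (huz : u.obj (x (F.obj z)) = z) :
    r (F.obj y) - χ t = r (F.obj z) - χ u := by
  let S : C → C → Prop := fun y z => ∀ t u : C ⥤ C, MemAut1 k F t → MemAut1 k F u →
    t.obj (x (F.obj y)) = y → u.obj (x (F.obj z)) = z → r (F.obj y) - χ t = r (F.obj z) - χ u
  have hS : Equivalence S :=
    { refl := fun y t u ht hu hty huy =>
        hr.sub_eq_sub_of_ne_zero hF.1 hx hχ ht hu hty huy (𝟙 y) (hid y)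
      symm := fun h t u ht hu hty huz => (h u t hu ht huz hty).symm
      trans := fun {_ w _} h₁ h₂ t u ht hu hty huz => by
        obtain ⟨v, hv, hvw⟩ := hF.fibreTransitive (F.obj w) _ _ (hx _) rfl
        exact (h₁ t v ht hv hty hvw).trans (h₂ v u hv hu hvw huz) }
  refine hS.eqvGen_iff.1 (Relation.EqvGen.mono ?_ _ _ (hF.2.1 y z)) t u ht hu hty huz
  rintro a b ⟨g, hg⟩ t u ht hu hta hub
  exact hr.sub_eq_sub_of_ne_zero hF.1 hx hχ ht hu hta hub g hg

end IsScalarInnerEuler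

end EulerDerivation

theorem euler_derivation_inner_implies_character_zero (k : Type w) [Field k]
    {C : Type u} [Category.{v} C] [Preadditive C] [CategoryTheory.Linear k C]
    {B : Type u} [Category.{v} B] [Preadditive B] [CategoryTheory.Linear k B]
    (hend : ∀ (b : B) (e : b ⟶ b), ∃ r : k, e = r • 𝟙 b)
    (F : C ⥤ B) (hF : IsGaloisCovering k F)
    (x : B → C) (hx : ∀ b : B, F.obj (x b) = b)
    (χ : (C ⥤ C) → k)
    (hχ : ∀ s t : C ⥤ C, MemAut1 k F s → MemAut1 k F t → χ (s ⋙ t) = χ s + χ t)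
    (hinner : ∃ α : ∀ b : B, b ⟶ b, ∀ (s : C ⥤ C), MemAut1 k F s →
      ∀ (b c : B) (f : b ⟶ c), f ∈ gradeSet F x s b c →
        χ s • f = f ≫ α c - α b ≫ f) :
    ∀ s : C ⥤ C, MemAut1 k F s → χ s = 0 := by
  intro s hs
  by_cases hzero : ∃ a : C, IsZero a
  · obtain ⟨a, ha⟩ := hzero
    have h := hχ s s hs hs
    rwa [hF.2.1.comp_self_eq_of_isZero ha s, left_eq_add] at h
  obtain ⟨r, hr⟩ := exists_isScalarInnerEuler hend hinner
  have hid : ∀ a : C, 𝟙 a ≠ 0 := fun a h => hzero ⟨a, (IsZero.iff_id_eq_zero a).2 h⟩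
  obtain ⟨b₀, -⟩ := hF.2.2
  have hFs : F.obj (s.obj (x b₀)) = b₀ := (Functor.congr_obj hs.2.2 (x b₀)).trans (hx b₀)
  have h := hr.sub_eq_sub hF hx hχ hid memAut1_id hs (y := x b₀) (z := s.obj (x b₀))
    (by rw [Functor.id_obj, hx]) (by rw [hFs])
  rw [hFs, hx, character_id_eq_zero hχ] at h
  linear_combination h
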